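/- In the simplified setting where the exposure model is correctly specified (Φ(s) = R(s)γ for all s), monitor and subject locations share the same distribution G, and there are no additional covariates, the second-order Taylor-based asymptotic expectation of β̂_{∞,n*} − β reduces to −β(1/n*)·(r−2)σ²_{η*}/∫ w(s)² dG(s), where r is the dimension of R, σ²_{η*} is the monitor noise variance, and w(s) = R(s)γ. -/

import Mathlib

/-!
With `Cov(γ̂) = σ²A⁻¹` the two Taylor terms collapse: `tr(A · σ²A⁻¹) = rσ²` and
`γᵀ(A · σ²A⁻¹ · A)γ = σ² γᵀAγ`, so the bracket equals `−(r − 2)σ² / γᵀAγ`.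
Since `A` is the second-moment matrix of `R`, linearity of the integral gives
`γᵀAγ = ∫ (R(s)γ)² dG`.
-/

open MeasureTheory Matrix

section SecondMoment

variable {α ι : Type*} [MeasurableSpace α] [Fintype ι]

theorem integral_sq_sum_mul_eq_dotProduct_mulVec (μ : Measure α) (R : α → ι → ℝ) (γ : ι → ℝ)
    (A : Matrix ι ι ℝ) (hA : ∀ i j, A i j = ∫ s, R s i * R s j ∂μ)
    (hInt : ∀ i j, Integrable (fun s => R s i * R s j) μ) :
    ∫ s, (∑ k, R s k * γ k) ^ 2 ∂μ = γ ⬝ᵥ A *ᵥ γ := by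
  have hexpand : ∀ s, (∑ k, R s k * γ k) ^ 2 = ∑ i, ∑ j, γ i * γ j * (R s i * R s j) := by
    intro s
    rw [sq, Finset.sum_mul_sum]
    exact Finset.sum_congr rfl fun i _ => Finset.sum_congr rfl fun j _ => by ring
  have hInt' : ∀ i j, Integrable (fun s => γ i * γ j * (R s i * R s j)) μ :=
    fun i j => (hInt i j).const_mul _
  simp_rw [hexpand]
  rw [integral_finsetSum _ fun i _ => integrable_finsetSum _ fun j _ => hInt' i j]
  simp_rw [integral_finsetSum _ fun j _ => hInt' _ j, integral_const_mul, ← hA,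
    dotProduct, mulVec, dotProduct, Finset.mul_sum]
  exact Finset.sum_congr rfl fun i _ => Finset.sum_congr rfl fun j _ => by ring

end SecondMoment

section InverseCovariance

variable {ι : Type*} [Fintype ι] [DecidableEq ι]

theorem trace_mul_smul_nonsing_inv {A : Matrix ι ι ℝ} (hA : IsUnit A.det) (σ : ℝ) :
    trace (A * (σ • A⁻¹)) = σ * Fintype.card ι := by
  rw [Matrix.mul_smul, mul_nonsing_inv A hA, trace_smul, trace_one, smul_eq_mul]

theorem dotProduct_mul_smul_nonsing_inv_mul_mulVec {A : Matrix ι ι ℝ} (hA : IsUnit A.det)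
    (σ : ℝ) (γ : ι → ℝ) :
    γ ⬝ᵥ (A * (σ • A⁻¹) * A) *ᵥ γ = σ * (γ ⬝ᵥ A *ᵥ γ) := by
  rw [Matrix.mul_smul, mul_nonsing_inv A hA, Matrix.smul_mul, Matrix.one_mul, smul_mulVec, dotProduct_smul,
    smul_eq_mul]

end InverseCovariance

theorem neg_inv_mul_add_two_mul_inv_sq_mul (q σ r : ℝ) :
    -q⁻¹ * (σ * r) + 2 * (q ^ 2)⁻¹ * (σ * q) = -(r - 2) * σ / q := by
  rcases eq_or_ne q 0 with rfl | hq
  · simp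
  · field_simp
    ring

theorem stmt17_general {r : ℕ} (G : Measure (ℝ × ℝ))
    (R : ℝ × ℝ → Fin r → ℝ) (γ : Fin r → ℝ) (β σ2 : ℝ) (nstar : ℕ)
    (A : Matrix (Fin r) (Fin r) ℝ)
    (hA : ∀ i j, A i j = ∫ s, R s i * R s j ∂G)
    (hApos : A.PosDef)
    (hInt : ∀ i j, Integrable (fun s => R s i * R s j) G) :
    (1 / nstar : ℝ) * β *
        (-(γ ⬝ᵥ A.mulVec γ)⁻¹ * Matrix.trace (A * (σ2 • A⁻¹))
          + 2 * ((γ ⬝ᵥ A.mulVec γ) ^ 2)⁻¹ * (γ ⬝ᵥ (A * (σ2 • A⁻¹) * A).mulVec γ))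
      = -β * (1 / nstar : ℝ) * ((r : ℝ) - 2) * σ2 /
          ∫ s, (∑ k, R s k * γ k) ^ 2 ∂G := by
  have hdet : IsUnit A.det := isUnit_iff_ne_zero.mpr hApos.det_pos.ne'
  rw [trace_mul_smul_nonsing_inv hdet, dotProduct_mul_smul_nonsing_inv_mul_mulVec hdet,
    integral_sq_sum_mul_eq_dotProduct_mulVec G R γ A hA hInt, Fintype.card_fin,
    neg_inv_mul_add_two_mul_inv_sq_mul]
  ring

/-- In the correctly-specified simplified setting, combining the second-order Taylor
expansion of `f(γ̂) = (γᵀAγ̂)/(γ̂ᵀAγ̂)` with the order-`n*⁻¹` asymptotic covariance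
`Cov(γ̂) = σ²A⁻¹` gives the asymptotic bias
`E(β̂ − β) = −β (1/n*) (r−2) σ² / ∫ w(s)² dG(s)` where `w(s) = R(s)γ`. -/
theorem stmt17 {r : ℕ} (G : Measure (ℝ × ℝ)) [IsProbabilityMeasure G]
    (R : ℝ × ℝ → Fin r → ℝ) (γ : Fin r → ℝ) (β σ2 : ℝ) (nstar : ℕ) (hn : 0 < nstar)
    (hσ : 0 ≤ σ2)
    (A : Matrix (Fin r) (Fin r) ℝ)
    (hA : ∀ i j, A i j = ∫ s, R s i * R s j ∂G)
    (hApos : A.PosDef)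
    (hInt : ∀ i j, Integrable (fun s => R s i * R s j) G) :
    (1 / nstar : ℝ) * β *
        (-(γ ⬝ᵥ A.mulVec γ)⁻¹ * Matrix.trace (A * (σ2 • A⁻¹))
          + 2 * ((γ ⬝ᵥ A.mulVec γ) ^ 2)⁻¹ * (γ ⬝ᵥ (A * (σ2 • A⁻¹) * A).mulVec γ))
      = -β * (1 / nstar : ℝ) * ((r : ℝ) - 2) * σ2 /
          ∫ s, (∑ k, R s k * γ k) ^ 2 ∂G :=
  stmt17_general G R γ β σ2 nstar A hA hApos hInt
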